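/- Let A be an irreducible n×n real stochastic matrix of period t, with surjective periodic partition P : {1,…,n} → ℤ/tℤ (A_{ij} > 0 implies P(j) = P(i) + 1), where t is the exact period in the sense that there exists m ≥ 1 such that (A^{mt})_{ij} > 0 whenever P(i) = P(j). Then every n×n symmetric matrix X with nonnegative entries satisfying A X Aᵀ = X is a linear combination with nonnegative coefficients of the indicator matrices X^{(δ)}: there exist reals c_δ ≥ 0, for δ = 0, 1, …, ⌊t/2⌋, such that X = Σ_δ c_δ X^{(δ)}. -/

import Mathlib

open Matrix BigOperators

/-- The circular distance between the periodic classes of `i` and `j`: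
`min (a, t - a)` where `a ∈ {0, …, t-1}` represents `P j - P i` in `ℤ/tℤ`. -/
def cdist {n t : ℕ} (P : Fin n → ZMod t) (i j : Fin n) : ℕ :=
  min (P j - P i).val (t - (P j - P i).val)

/-- The 0-1 indicator matrix `X⁽δ⁾` of the relation `dist(i,j) = δ`. -/
def indMat {n t : ℕ} (P : Fin n → ZMod t) (δ : ℕ) : Matrix (Fin n) (Fin n) ℝ :=
  Matrix.of fun i j => if cdist P i j = δ then 1 else 0

/-!
Since `t` is the exact period, `B = A ^ (m * t)` is stochastic with `B i k > 0` exactly when `i`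
and `k` lie in the same class, and `X` is a fixed point of `Y ↦ B Y Bᵀ`. By the maximum principle
`X` is constant on every block `P⁻¹ a × P⁻¹ b`. One application of `A` moves both classes on by one
step, so the value on the block depends only on `b - a`, and the symmetry of `X` identifies the
values at `b - a` and `a - b`, i.e. it depends only on the circular distance.
-/

section Stochastic

variable {ι : Type*} [Fintype ι]

lemma Matrix.mul_mul_transpose_apply {R : Type*} [CommSemiring R] (B X : Matrix ι ι R)
    (i j : ι) : (B * X * Bᵀ) i j = ∑ p : ι × ι, B i p.1 * B j p.2 * X p.1 p.2 := by
  simp only [mul_apply, transpose_apply, Finset.sum_mul, Fintype.sum_prod_type]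
  rw [Finset.sum_comm]
  exact Finset.sum_congr rfl fun k _ => Finset.sum_congr rfl fun l _ => by ring

lemma Matrix.pow_mul_mul_transpose_pow {R : Type*} [CommSemiring R] [DecidableEq ι]
    {A X : Matrix ι ι R} (hfix : A * X * Aᵀ = X) (s : ℕ) : A ^ s * X * (A ^ s)ᵀ = X := by
  induction s with
  | zero => simp
  | succ s ih =>
    rw [pow_succ', transpose_mul]
    calc A * A ^ s * X * ((A ^ s)ᵀ * Aᵀ) = A * (A ^ s * X * (A ^ s)ᵀ) * Aᵀ := by
          simp only [Matrix.mul_assoc]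
      _ = X := by rw [ih, hfix]

lemma Matrix.sum_apply_mul_apply_of_mem_rowStochastic [DecidableEq ι] {B : Matrix ι ι ℝ}
    (hB : B ∈ rowStochastic ℝ ι) (i j : ι) : ∑ p : ι × ι, B i p.1 * B j p.2 = 1 := by
  rw [Fintype.sum_prod_type, ← Finset.sum_mul_sum, sum_row_of_mem_rowStochastic hB,
    sum_row_of_mem_rowStochastic hB, one_mul]

lemma eq_of_weighted_sum_eq_of_le {κ : Type*} [Fintype κ] {w f : κ → ℝ} {x : ℝ}
    (hw : ∀ y, 0 ≤ w y) (hw1 : ∑ y, w y = 1) (hx : ∑ y, w y * f y = x)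
    (hle : ∀ y, 0 < w y → f y ≤ x) {y : κ} (hy : 0 < w y) : f y = x := by
  have hterm : ∀ z ∈ Finset.univ, w z * f z ≤ w z * x := fun z _ =>
    (hw z).eq_or_lt.elim (fun h => by simp [← h])
      (fun h => mul_le_mul_of_nonneg_left (hle z h) h.le)
  have hsum : ∑ z, w z * f z = ∑ z, w z * x := by rw [hx, ← Finset.sum_mul, hw1, one_mul]
  exact mul_left_cancel₀ hy.ne' ((Finset.sum_eq_sum_iff_of_le hterm).1 hsum y (Finset.mem_univ y))

lemma weighted_sum_eq_of_forall_ne_zero {κ : Type*} [Fintype κ] {w f : κ → ℝ} {x : ℝ}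
    (hw1 : ∑ y, w y = 1) (hf : ∀ y, w y ≠ 0 → f y = x) : ∑ y, w y * f y = x := by
  calc ∑ y, w y * f y = ∑ y, w y * x := Finset.sum_congr rfl fun y _ => by
        by_cases hy : w y = 0
        · simp [hy]
        · rw [hf y hy]
    _ = x := by rw [← Finset.sum_mul, hw1, one_mul]

lemma Matrix.apply_eq_of_mul_mul_transpose_eq [DecidableEq ι] {α : Type*}
    {B X : Matrix ι ι ℝ} (hB : B ∈ rowStochastic ℝ ι) (hfix : B * X * Bᵀ = X) {Q : ι → α}
    (hBQ : ∀ i k, 0 < B i k ↔ Q i = Q k) {i j k l : ι} (hk : Q i = Q k) (hl : Q j = Q l) :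
    X i j = X k l := by
  classical
  set S := Finset.univ.filter fun p : ι × ι => Q i = Q p.1 ∧ Q j = Q p.2
  obtain ⟨b, hbS, hmax⟩ := S.exists_max_image (fun p => X p.1 p.2) ⟨(i, j), by simp [S]⟩
  obtain ⟨hb₁, hb₂⟩ : Q i = Q b.1 ∧ Q j = Q b.2 := by simpa [S] using hbS
  have hB₀ : ∀ i k, 0 ≤ B i k := fun i k => nonneg_of_mem_rowStochastic hB
  have hwpos : ∀ p : ι × ι, 0 < B b.1 p.1 * B b.2 p.2 ↔ p ∈ S := fun p => by
    rw [(mul_nonneg (hB₀ _ _) (hB₀ _ _)).lt_iff_ne', mul_ne_zero_iff,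
      ← (hB₀ _ _).lt_iff_ne', ← (hB₀ _ _).lt_iff_ne']
    simp [S, hBQ, ← hb₁, ← hb₂]
  -- `X` at a maximiser `b` of the block is a positively weighted average of the whole block.
  have hmaxS : ∀ p ∈ S, X p.1 p.2 = X b.1 b.2 := fun p hp =>
    eq_of_weighted_sum_eq_of_le (fun q => mul_nonneg (hB₀ _ _) (hB₀ _ _))
      (sum_apply_mul_apply_of_mem_rowStochastic hB _ _)
      (by rw [← mul_mul_transpose_apply, hfix])
      (fun q hq => hmax q ((hwpos q).1 hq)) ((hwpos p).2 hp)
  rw [hmaxS (i, j) (by simp [S]), hmaxS (k, l) (by simp [S, hk, hl])]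

end Stochastic

section Periodic

variable {ι G : Type*} [AddMonoidWithOne G]

lemma Matrix.eq_add_of_pow_apply_ne_zero [Fintype ι] [DecidableEq ι] {R : Type*} [Semiring R]
    {A : Matrix ι ι R} {P : ι → G} (hP : ∀ i j, A i j ≠ 0 → P j = P i + 1) (s : ℕ) {i j : ι}
    (h : (A ^ s) i j ≠ 0) : P j = P i + s := by
  induction s generalizing j with
  | zero =>
    obtain rfl : i = j := by
      by_contra hij
      exact h (by simp [one_apply_ne hij])
    simp
  | succ s ih =>
    rw [pow_succ, mul_apply] at h
    obtain ⟨k, -, hk⟩ := Finset.exists_ne_zero_of_sum_ne_zero h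
    rw [hP k j (right_ne_zero_of_mul hk), ih (left_ne_zero_of_mul hk), Nat.cast_succ, add_assoc]

lemma Matrix.apply_eq_of_eq_add_one [Fintype ι] [DecidableEq ι] {A X : Matrix ι ι ℝ}
    (hA : A ∈ rowStochastic ℝ ι) (hfix : A * X * Aᵀ = X) {P : ι → G}
    (hP : ∀ i j, A i j ≠ 0 → P j = P i + 1)
    (hconst : ∀ i j k l, P i = P k → P j = P l → X i j = X k l)
    {i j k l : ι} (hk : P k = P i + 1) (hl : P l = P j + 1) : X i j = X k l := by
  calc X i j = (A * X * Aᵀ) i j := by rw [hfix]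
    _ = X k l := by
      rw [mul_mul_transpose_apply]
      refine weighted_sum_eq_of_forall_ne_zero (sum_apply_mul_apply_of_mem_rowStochastic hA i j)
        fun p hp => hconst _ _ _ _ ?_ ?_
      · rw [hk, hP _ _ (left_ne_zero_of_mul hp)]
      · rw [hl, hP _ _ (right_ne_zero_of_mul hp)]

end Periodic

section CircularDistance

variable {ι : Type*} {t : ℕ}

lemma apply_eq_of_sub_eq [NeZero t] {X : Matrix ι ι ℝ} {P : ι → ZMod t}
    (hPsurj : Function.Surjective P)
    (hconst : ∀ i j k l, P i = P k → P j = P l → X i j = X k l)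
    (hshift : ∀ i j k l, P k = P i + 1 → P l = P j + 1 → X i j = X k l)
    {i j k l : ι} (h : P l - P k = P j - P i) : X i j = X k l := by
  have htranslate : ∀ s : ℕ, ∀ i j k l, P k = P i + s → P l = P j + s → X i j = X k l := by
    intro s
    induction s with
    | zero =>
      intro i j k l hk hl
      rw [Nat.cast_zero, add_zero] at hk hl
      exact hconst i j k l hk.symm hl.symm
    | succ s ih =>
      intro i j k l hk hl
      obtain ⟨i', hi'⟩ := hPsurj (P i + s)
      obtain ⟨j', hj'⟩ := hPsurj (P j + s)
      refine (ih i j i' j' hi' hj').trans (hshift i' j' k l ?_ ?_)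
      · rw [hk, hi', Nat.cast_succ, add_assoc]
      · rw [hl, hj', Nat.cast_succ, add_assoc]
  refine htranslate (P k - P i).val i j k l ?_ ?_ <;> rw [ZMod.natCast_zmod_val]
  · ring
  · linear_combination h

variable {n : ℕ}

lemma cdist_eq_natAbs_valMinAbs [NeZero t] (P : Fin n → ZMod t) (i j : Fin n) :
    cdist P i j = (P j - P i).valMinAbs.natAbs :=
  (ZMod.valMinAbs_natAbs_eq_min _).symm

lemma cdist_eq_of_eq_natCast [NeZero t] {P : Fin n → ZMod t} {i j : Fin n} {δ : ℕ} (hi : P i = 0)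
    (hj : P j = δ) (hδ : δ ≤ t / 2) : cdist P i j = δ := by
  rw [cdist_eq_natAbs_valMinAbs, hi, hj, sub_zero, ZMod.valMinAbs_natCast_of_le_half hδ,
    Int.natAbs_natCast]

lemma apply_eq_of_cdist_eq [NeZero t] {X : Matrix (Fin n) (Fin n) ℝ} (hsym : X.IsSymm)
    {P : Fin n → ZMod t} (hsub : ∀ i j k l, P l - P k = P j - P i → X i j = X k l)
    {i j k l : Fin n} (h : cdist P i j = cdist P k l) : X i j = X k l := by
  rw [cdist_eq_natAbs_valMinAbs, cdist_eq_natAbs_valMinAbs] at h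
  rcases ZMod.natAbs_valMinAbs_eq_natAbs_valMinAbs.1 h.symm with h | h
  · exact hsub _ _ _ _ h
  · rw [← hsym.apply]
    exact hsub _ _ _ _ (by rw [h]; ring)

lemma cdist_le_half [NeZero t] (P : Fin n → ZMod t) (i j : Fin n) : cdist P i j ≤ t / 2 :=
  cdist_eq_natAbs_valMinAbs P i j ▸ ZMod.natAbs_valMinAbs_le _

lemma eq_sum_smul_indMat [NeZero t] {P : Fin n → ZMod t} {X : Matrix (Fin n) (Fin n) ℝ}
    (c : ℕ → ℝ) (hX : ∀ i j, X i j = c (cdist P i j)) :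
    X = ∑ δ ∈ Finset.range (t / 2 + 1), c δ • indMat P δ := by
  ext i j
  simp only [Matrix.sum_apply, Matrix.smul_apply, indMat, of_apply, smul_eq_mul, mul_ite,
    mul_one, mul_zero, Finset.sum_ite_eq, Finset.mem_range]
  rw [if_pos (Nat.lt_succ_of_le (cdist_le_half P i j)), hX]

end CircularDistance

theorem level2_solutions_span_general {n t : ℕ} (ht : 1 ≤ t)
    (A : Matrix (Fin n) (Fin n) ℝ)
    (hAnn : ∀ i j, 0 ≤ A i j) (hrow : ∀ i, ∑ j, A i j = 1)
    (P : Fin n → ZMod t) (hPsurj : Function.Surjective P)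
    (hP : ∀ i j, 0 < A i j → P j = P i + 1)
    (hexact : ∃ m : ℕ, 1 ≤ m ∧ ∀ i j, P i = P j → 0 < (A ^ (m * t)) i j)
    (X : Matrix (Fin n) (Fin n) ℝ) (hsym : X.IsSymm)
    (hXnn : ∀ i j, 0 ≤ X i j)
    (hfix : A * X * Aᵀ = X) :
    ∃ c : ℕ → ℝ, (∀ δ, 0 ≤ c δ) ∧
      X = ∑ δ ∈ Finset.range (t / 2 + 1), c δ • indMat P δ := by
  have : NeZero t := ⟨by omega⟩
  have hA : A ∈ rowStochastic ℝ (Fin n) := mem_rowStochastic_iff_sum.2 ⟨hAnn, hrow⟩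
  have hP' : ∀ i j, A i j ≠ 0 → P j = P i + 1 := fun i j h => hP i j ((hAnn i j).lt_of_ne' h)
  obtain ⟨m, -, hpos⟩ := hexact
  have hconst : ∀ i j k l, P i = P k → P j = P l → X i j = X k l := fun i j k l =>
    apply_eq_of_mul_mul_transpose_eq (pow_mem hA (m * t)) (pow_mul_mul_transpose_pow hfix _)
      fun i k => ⟨fun h => by simpa using (eq_add_of_pow_apply_ne_zero hP' _ h.ne').symm,
        hpos i k⟩
  have hsub : ∀ i j k l, P l - P k = P j - P i → X i j = X k l := fun i j k l =>
    apply_eq_of_sub_eq hPsurj hconst fun i j k l =>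
      apply_eq_of_eq_add_one hA hfix hP' hconst
  choose rep hrep using hPsurj
  refine ⟨fun δ => X (rep 0) (rep δ), fun δ => hXnn _ _, eq_sum_smul_indMat _ fun i j => ?_⟩
  exact apply_eq_of_cdist_eq hsym hsub
    (cdist_eq_of_eq_natCast (hrep 0) (hrep _) (cdist_le_half P i j)).symm

/-- For an irreducible stochastic matrix `A` of exact period `t` with periodic
partition `P`, every nonnegative symmetric solution of `A X Aᵀ = X` is a
nonnegative linear combination of the distance indicator matrices `X⁽δ⁾`,
`δ = 0, 1, …, ⌊t/2⌋`. -/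
theorem level2_solutions_span {n t : ℕ} (ht : 1 ≤ t)
    (A : Matrix (Fin n) (Fin n) ℝ)
    (hAnn : ∀ i j, 0 ≤ A i j) (hrow : ∀ i, ∑ j, A i j = 1)
    (hirr : ∀ i j, ∃ m : ℕ, 1 ≤ m ∧ 0 < (A ^ m) i j)
    (P : Fin n → ZMod t) (hPsurj : Function.Surjective P)
    (hP : ∀ i j, 0 < A i j → P j = P i + 1)
    (hexact : ∃ m : ℕ, 1 ≤ m ∧ ∀ i j, P i = P j → 0 < (A ^ (m * t)) i j)
    (X : Matrix (Fin n) (Fin n) ℝ) (hsym : X.IsSymm)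
    (hXnn : ∀ i j, 0 ≤ X i j)
    (hfix : A * X * Aᵀ = X) :
    ∃ c : ℕ → ℝ, (∀ δ, 0 ≤ c δ) ∧
      X = ∑ δ ∈ Finset.range (t / 2 + 1), c δ • indMat P δ :=
  level2_solutions_span_general ht A hAnn hrow P hPsurj hP hexact X hsym hXnn hfix
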